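/- Let G be a bull-free graph and let Q = v_1 v_2 v_3 v_4 v_5 v_1 be an induced 5-cycle in G which is a smallest induced odd cycle of G. If w ∈ C_i and w' ∈ A_{i+1} ∪ B_{i-1} ∪ B_{i+1}, then ww' is an edge of G. -/

import Mathlib

/-- `H` is contained in `G` as an induced subgraph. -/
def ContainsInduced {α β : Type*} (H : SimpleGraph α) (G : SimpleGraph β) : Prop :=
  ∃ f : α ↪ β, ∀ a b, G.Adj (f a) (f b) ↔ H.Adj a b

/-- The bull: a triangle `v2 v3 v4` with pendant edges `v1 v2` and `v4 v5`. -/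
def bull : SimpleGraph (Fin 5) :=
  SimpleGraph.fromRel (fun a b =>
    ((a : ℕ), (b : ℕ)) ∈ [(0, 1), (1, 2), (2, 3), (3, 4), (1, 3)])

/-- `u : ZMod k → V` lists the vertices (in cyclic order) of an induced cycle of
length `k` in `G`. -/
def IsInducedCycle {V : Type*} (G : SimpleGraph V) {k : ℕ} (u : ZMod k → V) : Prop :=
  Function.Injective u ∧ ∀ i j : ZMod k, G.Adj (u i) (u j) ↔ (j = i + 1 ∨ i = j + 1)

/-- `v : ZMod p → V` is a smallest induced odd cycle of `G` of length `p ≥ 5`: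
an induced odd cycle of length `p ≥ 5` such that `G` has no induced odd cycle of
length `k` with `5 ≤ k < p`. -/
def IsSmallestInducedOddCycle {V : Type*} (G : SimpleGraph V) {p : ℕ}
    (v : ZMod p → V) : Prop :=
  5 ≤ p ∧ Odd p ∧ IsInducedCycle G v ∧
    ∀ k : ℕ, 5 ≤ k → k < p → Odd k → ∀ u : ZMod k → V, ¬ IsInducedCycle G u

/-- `A_i`: the vertices outside the cycle `Q` whose neighbourhood on `Q` is
exactly `{v_i}`. -/
def setA {V : Type*} (G : SimpleGraph V) {p : ℕ} (v : ZMod p → V) (i : ZMod p) :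
    Set V :=
  {w | w ∉ Set.range v ∧ ∀ j : ZMod p, G.Adj w (v j) ↔ j = i}

/-- `B_i`: the vertices outside the cycle `Q` whose neighbourhood on `Q` is
exactly `{v_i, v_{i+2}}`. -/
def setB {V : Type*} (G : SimpleGraph V) {p : ℕ} (v : ZMod p → V) (i : ZMod p) :
    Set V :=
  {w | w ∉ Set.range v ∧ ∀ j : ZMod p, G.Adj w (v j) ↔ (j = i ∨ j = i + 2)}

/-- `C_i`: the vertices outside the cycle `Q` whose neighbourhood on `Q` is
exactly `{v_i, v_{i+1}, v_{i+2}}`. -/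
def setC {V : Type*} (G : SimpleGraph V) {p : ℕ} (v : ZMod p → V) (i : ZMod p) :
    Set V :=
  {w | w ∉ Set.range v ∧ ∀ j : ZMod p, G.Adj w (v j) ↔ (j = i ∨ j = i + 1 ∨ j = i + 2)}

/-- `D_i`: the vertices outside the cycle `Q` whose neighbourhood on `Q` is
exactly `{v_i, v_{i+1}, v_{i+2}, v_{i+3}}`. -/
def setD {V : Type*} (G : SimpleGraph V) {p : ℕ} (v : ZMod p → V) (i : ZMod p) :
    Set V :=
  {w | w ∉ Set.range v ∧
    ∀ j : ZMod p, G.Adj w (v j) ↔ (j = i ∨ j = i + 1 ∨ j = i + 2 ∨ j = i + 3)}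

lemma bull_of {V : Type*} (G : SimpleGraph V) (a b c d e : V)
    (hab : a ≠ b) (hac : a ≠ c) (had : a ≠ d) (hae : a ≠ e)
    (hbc : b ≠ c) (hbd : b ≠ d) (hbe : b ≠ e)
    (hcd : c ≠ d) (hce : c ≠ e) (hde : d ≠ e)
    (eab : G.Adj a b) (ebc : G.Adj b c) (ecd : G.Adj c d)
    (ede : G.Adj d e) (ebd : G.Adj b d)
    (nac : ¬ G.Adj a c) (nad : ¬ G.Adj a d) (nae : ¬ G.Adj a e)
    (nbe : ¬ G.Adj b e) (nce : ¬ G.Adj c e) :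
    ContainsInduced bull G := by
  refine ⟨⟨![a,b,c,d,e], ?_⟩, ?_⟩
  · intro x y h
    fin_cases x <;> fin_cases y <;> simp_all
  · intro x y
    change G.Adj (![a,b,c,d,e] x) (![a,b,c,d,e] y) ↔ _
    fin_cases x <;> fin_cases y <;>
      simp_all [bull, SimpleGraph.fromRel_adj, G.adj_comm] <;> decide

/-- first bull shape: `w'` adjacent to `v(i+1)` only among `v i, v(i+1), v(i+2), v(i+3)`. -/
lemma helper1 {V : Type*} (G : SimpleGraph V)
    (hbull : ¬ ContainsInduced bull G)
    (v : ZMod 5 → V) (hQ : IsSmallestInducedOddCycle G v)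
    (i : ZMod 5) (w w' : V) (hw : w ∈ setC G v i)
    (hw'r : w' ∉ Set.range v)
    (h0 : ¬ G.Adj w' (v i)) (h1 : G.Adj w' (v (i+1)))
    (h2 : ¬ G.Adj w' (v (i+2))) (h3 : ¬ G.Adj w' (v (i+3))) :
    G.Adj w w' := by
  obtain ⟨_, _, ⟨hvinj, hvadj⟩, _⟩ := hQ
  obtain ⟨hwr, hwadj⟩ := hw
  by_contra hn
  have hww' : w ≠ w' := fun h => h0 (h ▸ (hwadj i).mpr (Or.inl rfl))
  -- bull: a = w', b = v(i+1), c = w, d = v(i+2), e = v(i+3)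
  refine hbull (bull_of G w' (v (i+1)) w (v (i+2)) (v (i+3))
    (fun h => hw'r ⟨i+1, h.symm⟩) hww'.symm
    (fun h => hw'r ⟨i+2, h.symm⟩) (fun h => hw'r ⟨i+3, h.symm⟩)
    (fun h => hwr ⟨i+1, h⟩)
    (fun h => (by decide : ∀ i : ZMod 5, ¬ (i+1 = i+2)) i (hvinj h))
    (fun h => (by decide : ∀ i : ZMod 5, ¬ (i+1 = i+3)) i (hvinj h))
    (fun h => hwr ⟨i+2, h.symm⟩) (fun h => hwr ⟨i+3, h.symm⟩)
    (fun h => (by decide : ∀ i : ZMod 5, ¬ (i+2 = i+3)) i (hvinj h))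
    h1 ((hwadj (i+1)).mpr (Or.inr (Or.inl rfl))).symm
    ((hwadj (i+2)).mpr (Or.inr (Or.inr rfl)))
    ((hvadj (i+2) (i+3)).mpr ((by decide : ∀ i : ZMod 5, i+3 = i+2+1 ∨ i+2 = i+3+1) i))
    ((hvadj (i+1) (i+2)).mpr ((by decide : ∀ i : ZMod 5, i+2 = i+1+1 ∨ i+1 = i+2+1) i))
    (fun h => hn h.symm) h2 h3
    (fun h => ((by decide : ∀ i : ZMod 5, ¬ (i+3 = i+1+1 ∨ i+1 = i+3+1)) i)
      ((hvadj (i+1) (i+3)).mp h))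
    (fun h => ((by decide : ∀ i : ZMod 5, ¬ (i+3 = i ∨ i+3 = i+1 ∨ i+3 = i+2)) i)
      ((hwadj (i+3)).mp h)))

/-- Let `G` be a bull-free graph and let `Q = v_1 … v_5 v_1` be an induced 5-cycle of
`G` which is a smallest induced odd cycle of `G`.  If `w ∈ C_i` and
`w' ∈ A_{i+1} ∪ B_{i-1} ∪ B_{i+1}`, then `w w'` is an edge of `G`. -/
theorem C_nbr_edges {V : Type*} [Fintype V] (G : SimpleGraph V)
    (hbull : ¬ ContainsInduced bull G)
    (v : ZMod 5 → V) (hQ : IsSmallestInducedOddCycle G v)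
    (i : ZMod 5) (w w' : V) (hw : w ∈ setC G v i)
    (hw' : w' ∈ setA G v (i + 1) ∪ setB G v (i - 1) ∪ setB G v (i + 1)) :
    G.Adj w w' := by
  rcases hw' with (⟨hr, hadj⟩ | ⟨hr, hadj⟩) | ⟨hr, hadj⟩
  · -- A_{i+1}
    refine helper1 G hbull v hQ i w w' hw hr ?_ ?_ ?_ ?_
    · exact fun h => ((by decide : ∀ i : ZMod 5, ¬ (i = i+1)) i) ((hadj i).mp h)
    · exact (hadj (i+1)).mpr rfl
    · exact fun h => ((by decide : ∀ i : ZMod 5, ¬ (i+2 = i+1)) i) ((hadj (i+2)).mp h)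
    · exact fun h => ((by decide : ∀ i : ZMod 5, ¬ (i+3 = i+1)) i) ((hadj (i+3)).mp h)
  · -- B_{i-1}
    refine helper1 G hbull v hQ i w w' hw hr ?_ ?_ ?_ ?_
    · exact fun h => ((by decide : ∀ i : ZMod 5, ¬ (i = i-1 ∨ i = i-1+2)) i) ((hadj i).mp h)
    · exact (hadj (i+1)).mpr (Or.inr ((by decide : ∀ i : ZMod 5, i+1 = i-1+2) i))
    · exact fun h => ((by decide : ∀ i : ZMod 5, ¬ (i+2 = i-1 ∨ i+2 = i-1+2)) i) ((hadj (i+2)).mp h)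
    · exact fun h => ((by decide : ∀ i : ZMod 5, ¬ (i+3 = i-1 ∨ i+3 = i-1+2)) i) ((hadj (i+3)).mp h)
  · -- B_{i+1}: bull a = w', b = v(i+1), c = w, d = v i, e = v(i+4)
    obtain ⟨_, _, ⟨hvinj, hvadj⟩, _⟩ := hQ
    obtain ⟨hwr, hwadj⟩ := hw
    by_contra hn
    have h0 : ¬ G.Adj w' (v i) :=
      fun h => ((by decide : ∀ i : ZMod 5, ¬ (i = i+1 ∨ i = i+1+2)) i) ((hadj i).mp h)
    have hww' : w ≠ w' := fun h => h0 (h ▸ (hwadj i).mpr (Or.inl rfl))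
    refine hbull (bull_of G w' (v (i+1)) w (v i) (v (i+4))
      (fun h => hr ⟨i+1, h.symm⟩) hww'.symm
      (fun h => hr ⟨i, h.symm⟩) (fun h => hr ⟨i+4, h.symm⟩)
      (fun h => hwr ⟨i+1, h⟩)
      (fun h => (by decide : ∀ i : ZMod 5, ¬ (i+1 = i)) i (hvinj h))
      (fun h => (by decide : ∀ i : ZMod 5, ¬ (i+1 = i+4)) i (hvinj h))
      (fun h => hwr ⟨i, h.symm⟩) (fun h => hwr ⟨i+4, h.symm⟩)
      (fun h => (by decide : ∀ i : ZMod 5, ¬ (i = i+4)) i (hvinj h))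
      ((hadj (i+1)).mpr (Or.inl rfl))
      ((hwadj (i+1)).mpr (Or.inr (Or.inl rfl))).symm
      ((hwadj i).mpr (Or.inl rfl))
      ((hvadj i (i+4)).mpr ((by decide : ∀ i : ZMod 5, i+4 = i+1 ∨ i = i+4+1) i))
      ((hvadj (i+1) i).mpr ((by decide : ∀ i : ZMod 5, i = i+1+1 ∨ i+1 = i+1) i))
      (fun h => hn h.symm)
      h0
      (fun h => ((by decide : ∀ i : ZMod 5, ¬ (i+4 = i+1 ∨ i+4 = i+1+2)) i) ((hadj (i+4)).mp h))
      (fun h => ((by decide : ∀ i : ZMod 5, ¬ (i+4 = i+1+1 ∨ i+1 = i+4+1)) i)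
        ((hvadj (i+1) (i+4)).mp h))
      (fun h => ((by decide : ∀ i : ZMod 5, ¬ (i+4 = i ∨ i+4 = i+1 ∨ i+4 = i+2)) i)
        ((hwadj (i+4)).mp h)))
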